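/- arXiv:2103.06694 — 7 statements merged into one kernel-verified Lean document; each statement's English description precedes it below -/
import Mathlib

section
/- Let ℓ∞⁺ denote the set of bounded sequences s : ℕ → ℝ≥0 with norm ‖s‖ := sup_{i∈ℕ} s i, and let Γ : ℓ∞⁺ → ℓ∞⁺ be monotone and homogeneous of degree one. Suppose there exist λ ∈ (0,1) and s⁰ ∈ ℓ∞⁺ with inf_{i∈ℕ} s⁰_i > 0 such that Γ(s⁰) ≤ λ·s⁰ componentwise. Then for every s ∈ ℓ∞⁺ and every k ∈ ℕ, ‖Γᵏ(s)‖ ≤ (‖s⁰‖ / inf_{i∈ℕ} s⁰_i) · λᵏ · ‖s‖; in particular the discrete-time system induced by Γ is uniformly globally exponentially stable. -/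
open scoped NNReal

/-- A nonnegative sequence belongs to `ℓ∞⁺` iff it is bounded. -/
def InLinf (s : ℕ → ℝ≥0) : Prop := BddAbove (Set.range s)

/-- The sup-norm `‖s‖ = ⨆ i, s i` on `ℓ∞⁺`. -/
noncomputable def lnorm (s : ℕ → ℝ≥0) : ℝ≥0 := ⨆ i, s i

/-- A point of strict decay `Γ(s⁰) ≤ λ s⁰` (with `s⁰` uniformly positive) for
a monotone, homogeneous-of-degree-one operator `Γ : ℓ∞⁺ → ℓ∞⁺` yields
`‖Γᵏ(s)‖ ≤ (‖s⁰‖ / inf_i s⁰_i) · λᵏ · ‖s‖`; in particular the induced discrete-time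
system is uniformly globally exponentially stable. -/
theorem point_of_strict_decay_implies_UGES
    (Γ : (ℕ → ℝ≥0) → ℕ → ℝ≥0)
    (hmap : ∀ s, InLinf s → InLinf (Γ s))
    (hmono : ∀ r s, InLinf r → InLinf s → (∀ i, r i ≤ s i) → ∀ i, Γ r i ≤ Γ s i)
    (hhom : ∀ (c : ℝ≥0) (s : ℕ → ℝ≥0), InLinf s → ∀ i, Γ (fun j => c * s j) i = c * Γ s i)
    (lam : ℝ≥0) (hlam0 : 0 < lam) (hlam1 : lam < 1)
    (s0 : ℕ → ℝ≥0) (hs0b : InLinf s0) (hs0pos : 0 < ⨅ i, s0 i)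
    (hdec : ∀ i, Γ s0 i ≤ lam * s0 i) :
    (∀ s, InLinf s → ∀ k : ℕ,
      lnorm (Γ^[k] s) ≤ (lnorm s0 / ⨅ i, s0 i) * lam ^ k * lnorm s) ∧
    (∃ M : ℝ≥0, 0 < M ∧ ∃ a : ℝ≥0, 0 < a ∧ a < 1 ∧
      ∀ s, InLinf s → ∀ k : ℕ, lnorm (Γ^[k] s) ≤ M * a ^ k * lnorm s) := by

  set m := ⨅ i, s0 i with hm
  have key : ∀ s, InLinf s → ∀ k : ℕ,
      lnorm (Γ^[k] s) ≤ (lnorm s0 / m) * lam ^ k * lnorm s := by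
    intro s hs k
    -- componentwise bound
    have hbd : ∀ k, InLinf (Γ^[k] s) := by
      intro k
      induction k with
      | zero => simpa using hs
      | succ n ih => rw [Function.iterate_succ_apply']; exact hmap _ ih
    have hcomp : ∀ k i, Γ^[k] s i ≤ (lnorm s / m) * lam ^ k * s0 i := by
      intro k
      induction k with
      | zero =>
        intro i
        simp only [Function.iterate_zero, id_eq, pow_zero, mul_one]
        have h1 : s i ≤ lnorm s := le_ciSup hs i
        have h2 : m ≤ s0 i := ciInf_le (OrderBot.bddBelow _) i
        calc s i ≤ lnorm s := h1
          _ = lnorm s / m * m := by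
              rw [div_mul_cancel₀]; exact hs0pos.ne'
          _ ≤ lnorm s / m * s0 i := by gcongr
      | succ n ih =>
        intro i
        rw [Function.iterate_succ_apply']
        have hcL : InLinf (fun j => (lnorm s / m * lam ^ n) * s0 j) := by
          obtain ⟨B, hB⟩ := hs0b
          exact ⟨(lnorm s / m * lam ^ n) * B, by
            rintro x ⟨j, rfl⟩
            exact mul_le_mul_right (hB ⟨j, rfl⟩) _⟩
        have h1 : Γ (Γ^[n] s) i ≤ Γ (fun j => (lnorm s / m * lam ^ n) * s0 j) i := by
          refine hmono _ _ (hbd n) hcL ?_ i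
          intro j; simpa [mul_assoc] using ih j
        have h2 : Γ (fun j => (lnorm s / m * lam ^ n) * s0 j) i
            = (lnorm s / m * lam ^ n) * Γ s0 i := hhom _ _ hs0b i
        calc Γ (Γ^[n] s) i ≤ (lnorm s / m * lam ^ n) * Γ s0 i := h1.trans_eq h2
          _ ≤ (lnorm s / m * lam ^ n) * (lam * s0 i) := by gcongr; exact hdec i
          _ = lnorm s / m * lam ^ (n + 1) * s0 i := by ring
    have : lnorm (Γ^[k] s) ≤ (lnorm s / m) * lam ^ k * lnorm s0 := by
      refine ciSup_le fun i => (hcomp k i).trans ?_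
      gcongr
      exact le_ciSup hs0b i
    calc lnorm (Γ^[k] s) ≤ (lnorm s / m) * lam ^ k * lnorm s0 := this
      _ = (lnorm s0 / m) * lam ^ k * lnorm s := by
          simp only [div_eq_mul_inv]; ring
  refine ⟨key, lnorm s0 / m, ?_, lam, hlam0, hlam1, key⟩
  have h0 : m ≤ lnorm s0 := (ciInf_le (OrderBot.bddBelow _) 0).trans (le_ciSup hs0b 0)
  exact div_pos (hs0pos.trans_le h0) hs0pos
end

section
/- Let ℓ∞⁺ denote the set of bounded sequences s : ℕ → ℝ≥0 with norm ‖s‖ := sup_{i∈ℕ} s i, and let Γ : ℓ∞⁺ → ℓ∞⁺ be continuous (with respect to the sup-norm), monotone, subadditive, and homogeneous of degree one. Suppose there exist M > 0 and a ∈ (0,1) such that ‖Γᵏ(s)‖ ≤ M aᵏ ‖s‖ for all s ∈ ℓ∞⁺ and all k ∈ ℕ. Then there exist λ ∈ (0,1) and s⁰ ∈ ℓ∞⁺ with inf_{i∈ℕ} s⁰_i > 0 such that Γ(s⁰) ≤ λ·s⁰ componentwise (a point of strict decay). -/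
open scoped NNReal

/-- The sup-norm distance between two elements of `ℓ∞⁺`. -/
noncomputable def supDist (r s : ℕ → ℝ≥0) : ℝ := ⨆ i, |(r i : ℝ) - (s i : ℝ)|

/-!
With `λ ∈ (a, 1)` and `b = λ⁻¹`, take the truncated Neumann series
`s⁰ = ∑_{k < n} bᵏ Γᵏ(𝟙)`. It is at least `𝟙`, and subadditivity and homogeneity give
`b Γ(s⁰) ≤ ∑_{1 ≤ k ≤ n} bᵏ Γᵏ(𝟙) = s⁰ - 𝟙 + bⁿ Γⁿ(𝟙)`. Since `‖bⁿ Γⁿ(𝟙)‖ ≤ M (a b)ⁿ`,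
the last term is at most `𝟙` for large `n`, whence `Γ(s⁰) ≤ λ s⁰`.
-/

open Finset

lemma InLinf.const (c : ℝ≥0) : InLinf (fun _ => c) :=
  ⟨c, by rintro x ⟨i, rfl⟩; exact le_rfl⟩

lemma InLinf.one : InLinf 1 := InLinf.const 1

lemma InLinf.add {r s : ℕ → ℝ≥0} (hr : InLinf r) (hs : InLinf s) : InLinf (r + s) := by
  obtain ⟨A, hA⟩ := hr
  obtain ⟨B, hB⟩ := hs
  exact ⟨A + B, by rintro x ⟨i, rfl⟩; exact add_le_add (hA ⟨i, rfl⟩) (hB ⟨i, rfl⟩)⟩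

lemma InLinf.smul {s : ℕ → ℝ≥0} (c : ℝ≥0) (hs : InLinf s) : InLinf (c • s) := by
  obtain ⟨A, hA⟩ := hs
  exact ⟨c * A, by rintro x ⟨i, rfl⟩; exact mul_le_mul_right (hA ⟨i, rfl⟩) c⟩

lemma InLinf.finset_sum {ι : Type*} {t : Finset ι} {g : ι → ℕ → ℝ≥0}
    (hg : ∀ k ∈ t, InLinf (g k)) : InLinf (∑ k ∈ t, g k) :=
  Finset.sum_induction g InLinf (fun _ _ => InLinf.add) (InLinf.const 0) hg

lemma apply_le_lnorm {s : ℕ → ℝ≥0} (hs : InLinf s) (i : ℕ) : s i ≤ lnorm s :=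
  le_ciSup hs i

lemma lnorm_one : lnorm 1 = 1 :=
  ciSup_const

structure IsSublinearOnLinf (Γ : (ℕ → ℝ≥0) → ℕ → ℝ≥0) : Prop where
  inLinf_map : ∀ s, InLinf s → InLinf (Γ s)
  map_add_le : ∀ r s, InLinf r → InLinf s → Γ (r + s) ≤ Γ r + Γ s
  map_smul : ∀ (c : ℝ≥0) s, InLinf s → Γ (c • s) = c • Γ s

namespace IsSublinearOnLinf

variable {Γ : (ℕ → ℝ≥0) → ℕ → ℝ≥0}

lemma inLinf_iterate (hΓ : IsSublinearOnLinf Γ) {s : ℕ → ℝ≥0} (hs : InLinf s) (k : ℕ) :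
    InLinf (Γ^[k] s) := by
  induction k with
  | zero => exact hs
  | succ k ih => rw [Function.iterate_succ_apply']; exact hΓ.inLinf_map _ ih

lemma map_zero (hΓ : IsSublinearOnLinf Γ) : Γ 0 = 0 := by
  simpa using hΓ.map_smul 0 0 (InLinf.const 0)

lemma map_sum_le (hΓ : IsSublinearOnLinf Γ) {ι : Type*} {t : Finset ι} {g : ι → ℕ → ℝ≥0}
    (hg : ∀ k ∈ t, InLinf (g k)) : Γ (∑ k ∈ t, g k) ≤ ∑ k ∈ t, Γ (g k) :=
  Finset.le_sum_of_subadditive_on_pred Γ InLinf hΓ.map_zero.le hΓ.map_add_le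
    (fun _ _ => InLinf.add) g hg

end IsSublinearOnLinf

noncomputable def neumannSum (Γ : (ℕ → ℝ≥0) → ℕ → ℝ≥0) (b : ℝ≥0) (n : ℕ) : ℕ → ℝ≥0 :=
  ∑ k ∈ range n, b ^ k • Γ^[k] 1

namespace neumannSum

variable {Γ : (ℕ → ℝ≥0) → ℕ → ℝ≥0} {b : ℝ≥0} {n : ℕ}

lemma inLinf (hΓ : IsSublinearOnLinf Γ) : InLinf (neumannSum Γ b n) :=
  InLinf.finset_sum fun k _ => (hΓ.inLinf_iterate InLinf.one k).smul _

lemma one_le (hn : n ≠ 0) : 1 ≤ neumannSum Γ b n := by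
  unfold neumannSum
  simpa using single_le_sum (f := fun k => b ^ k • Γ^[k] 1) (fun k _ => zero_le)
    (mem_range.mpr (Nat.pos_of_ne_zero hn))

lemma succ_eq_one_add :
    neumannSum Γ b (n + 1) = 1 + b • ∑ k ∈ range n, b ^ k • Γ^[k + 1] 1 := by
  simp only [neumannSum, sum_range_succ', smul_sum, smul_smul, ← pow_succ', pow_zero,
    Function.iterate_zero, id_eq, one_smul, add_comm]

lemma map_le (hΓ : IsSublinearOnLinf Γ) :
    Γ (neumannSum Γ b n) ≤ ∑ k ∈ range n, b ^ k • Γ^[k + 1] 1 := by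
  have hiter := hΓ.inLinf_iterate InLinf.one
  calc Γ (neumannSum Γ b n) ≤ ∑ k ∈ range n, Γ (b ^ k • Γ^[k] 1) :=
        hΓ.map_sum_le fun k _ => (hiter k).smul _
    _ = ∑ k ∈ range n, b ^ k • Γ^[k + 1] 1 := by
        refine sum_congr rfl fun k _ => ?_
        rw [hΓ.map_smul _ _ (hiter k), Function.iterate_succ_apply']

lemma map_le_inv_smul (hΓ : IsSublinearOnLinf Γ) (hb : b ≠ 0)
    (htail : b ^ n • Γ^[n] 1 ≤ 1) : Γ (neumannSum Γ b n) ≤ b⁻¹ • neumannSum Γ b n := by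
  set S := ∑ k ∈ range n, b ^ k • Γ^[k + 1] 1
  have hS : b • S ≤ neumannSum Γ b n := by
    refine le_of_add_le_add_right (a := 1) ?_
    calc b • S + 1 = neumannSum Γ b (n + 1) := by rw [succ_eq_one_add, add_comm]
      _ = neumannSum Γ b n + b ^ n • Γ^[n] 1 := sum_range_succ _ _
      _ ≤ neumannSum Γ b n + 1 := add_le_add_right htail _
  calc Γ (neumannSum Γ b n) ≤ S := map_le hΓ
    _ = b⁻¹ • b • S := by rw [inv_smul_smul₀ hb]
    _ ≤ b⁻¹ • neumannSum Γ b n := smul_le_smul_of_nonneg_left hS zero_le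

end neumannSum

lemma exists_pow_smul_iterate_le_one {Γ : (ℕ → ℝ≥0) → ℕ → ℝ≥0} (hΓ : IsSublinearOnLinf Γ)
    {M a b : ℝ≥0} (hdecay : ∀ k : ℕ, lnorm (Γ^[k] 1) ≤ M * a ^ k) (hab : a * b < 1) :
    ∃ n ≠ 0, b ^ n • Γ^[n] 1 ≤ 1 := by
  have hlim : Filter.Tendsto (fun n : ℕ => M * (a * b) ^ n) Filter.atTop (nhds 0) := by
    simpa using (tendsto_pow_atTop_nhds_zero_of_lt_one zero_le hab).const_mul M
  obtain ⟨n, hn, hsmall⟩ :=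
    ((Filter.eventually_ne_atTop 0).and (hlim.eventually (ge_mem_nhds one_pos))).exists
  refine ⟨n, hn, fun i => ?_⟩
  calc b ^ n * Γ^[n] 1 i ≤ b ^ n * (M * a ^ n) :=
        mul_le_mul_right ((apply_le_lnorm (hΓ.inLinf_iterate InLinf.one n) i).trans
          (hdecay n)) _
    _ = M * (a * b) ^ n := by ring
    _ ≤ 1 := hsmall

theorem UGES_implies_point_of_strict_decay_general
    (Γ : (ℕ → ℝ≥0) → ℕ → ℝ≥0)
    (hmap : ∀ s, InLinf s → InLinf (Γ s))
    (hsub : ∀ r s, InLinf r → InLinf s → ∀ i, Γ (fun j => r j + s j) i ≤ Γ r i + Γ s i)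
    (hhom : ∀ (c : ℝ≥0) (s : ℕ → ℝ≥0), InLinf s → ∀ i, Γ (fun j => c * s j) i = c * Γ s i)
    (M : ℝ≥0) (a : ℝ≥0) (ha1 : a < 1)
    (hUGES : ∀ s, InLinf s → ∀ k : ℕ, lnorm (Γ^[k] s) ≤ M * a ^ k * lnorm s) :
    ∃ lam : ℝ≥0, 0 < lam ∧ lam < 1 ∧ ∃ s0 : ℕ → ℝ≥0, InLinf s0 ∧ (0 < ⨅ i, s0 i) ∧
      ∀ i, Γ s0 i ≤ lam * s0 i := by
  have hΓ : IsSublinearOnLinf Γ :=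
    ⟨hmap, hsub, fun c s hs => funext (hhom c s hs)⟩
  obtain ⟨lam, hal, hlam1⟩ := exists_between ha1
  have hlam0 : 0 < lam := zero_le.trans_lt hal
  have hdecay (k : ℕ) : lnorm (Γ^[k] 1) ≤ M * a ^ k := by
    simpa [lnorm_one] using hUGES 1 InLinf.one k
  have hab : a * lam⁻¹ < 1 := by rwa [← div_eq_mul_inv, div_lt_one hlam0]
  obtain ⟨n, hn, htail⟩ := exists_pow_smul_iterate_le_one hΓ hdecay hab
  refine ⟨lam, hlam0, hlam1, neumannSum Γ lam⁻¹ n, neumannSum.inLinf hΓ,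
    one_pos.trans_le (le_ciInf (neumannSum.one_le hn)), fun i => ?_⟩
  simpa using neumannSum.map_le_inv_smul hΓ (inv_ne_zero hlam0.ne') htail i

/-- For a continuous (w.r.t. the sup-norm), monotone, subadditive,
homogeneous-of-degree-one operator `Γ : ℓ∞⁺ → ℓ∞⁺`, uniform global exponential stability of
the induced discrete-time system implies the existence of a point of strict decay:
`λ ∈ (0,1)` and a uniformly positive `s⁰ ∈ ℓ∞⁺` with `Γ(s⁰) ≤ λ s⁰`. -/
theorem UGES_implies_point_of_strict_decay
    (Γ : (ℕ → ℝ≥0) → ℕ → ℝ≥0)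
    (hmap : ∀ s, InLinf s → InLinf (Γ s))
    (hcont : ∀ s, InLinf s → ∀ ε : ℝ, 0 < ε → ∃ δ : ℝ, 0 < δ ∧
      ∀ r, InLinf r → supDist r s < δ → supDist (Γ r) (Γ s) < ε)
    (hmono : ∀ r s, InLinf r → InLinf s → (∀ i, r i ≤ s i) → ∀ i, Γ r i ≤ Γ s i)
    (hsub : ∀ r s, InLinf r → InLinf s → ∀ i, Γ (fun j => r j + s j) i ≤ Γ r i + Γ s i)
    (hhom : ∀ (c : ℝ≥0) (s : ℕ → ℝ≥0), InLinf s → ∀ i, Γ (fun j => c * s j) i = c * Γ s i)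
    (M : ℝ≥0) (hM : 0 < M) (a : ℝ≥0) (ha0 : 0 < a) (ha1 : a < 1)
    (hUGES : ∀ s, InLinf s → ∀ k : ℕ, lnorm (Γ^[k] s) ≤ M * a ^ k * lnorm s) :
    ∃ lam : ℝ≥0, 0 < lam ∧ lam < 1 ∧ ∃ s0 : ℕ → ℝ≥0, InLinf s0 ∧ (0 < ⨅ i, s0 i) ∧
      ∀ i, Γ s0 i ≤ lam * s0 i :=
  UGES_implies_point_of_strict_decay_general Γ hmap hsub hhom M a ha1 hUGES
end

section
/- Let ℓ∞⁺ denote the set of bounded sequences s : ℕ → ℝ≥0 with norm ‖s‖ := sup_{i∈ℕ} s i, and let Γ : ℓ∞⁺ → ℓ∞⁺ be homogeneous of degree one. Suppose there is a nonincreasing sequence b : ℕ → ℝ≥0 with b(k) → 0 as k → ∞ such that ‖Γᵏ(s)‖ ≤ b(k)·‖s‖ for all s ∈ ℓ∞⁺ and k ∈ ℕ. Then there exist M > 0 and a ∈ (0,1) such that ‖Γᵏ(s)‖ ≤ M aᵏ ‖s‖ for all s ∈ ℓ∞⁺ and k ∈ ℕ; i.e., uniform global asymptotic stability of the discrete-time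 system induced by Γ implies its uniform global exponential stability. -/
open scoped NNReal
open Filter

/-! Once `b K ≤ 1/2` for some `K ≥ 1`, every block of `K` steps halves the norm, so along
multiples of `K` the norm decays like `2^(-k/K) = aᵏ` with `a = 2^(-1/K)`; the at most `K - 1`
remaining steps cost a factor `b 0`, and rounding `k / K` down costs a factor `2`. -/

theorem pow_div_mul_pow_le_pow {M₀ : Type*} [MonoidWithZero M₀] [Preorder M₀] [ZeroLEOneClass M₀]
    [PosMulMono M₀] {a : M₀} (ha₀ : 0 ≤ a) (ha₁ : a ≤ 1) {K : ℕ} (hK : 0 < K) (k : ℕ) :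
    (a ^ K) ^ (k / K) * a ^ K ≤ a ^ k :=
  calc (a ^ K) ^ (k / K) * a ^ K
      ≤ (a ^ K) ^ (k / K) * a ^ (k % K) :=
        mul_le_mul_of_nonneg_left (pow_le_pow_of_le_one ha₀ ha₁ (Nat.mod_lt k hK).le)
          (pow_nonneg (pow_nonneg ha₀ K) _)
    _ = a ^ k := by rw [← pow_mul, ← pow_add, Nat.div_add_mod]

section IterateBounds

variable {α : Type*} {f : α → α} {S : Set α} {ν : α → ℝ≥0}

theorem iterate_le_pow_mul (hS : Set.MapsTo f S S) {c : ℝ≥0}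
    (hf : ∀ x ∈ S, ν (f x) ≤ c * ν x) (m : ℕ) {x : α} (hx : x ∈ S) :
    ν (f^[m] x) ≤ c ^ m * ν x := by
  induction m generalizing x with
  | zero => simp
  | succ m ih =>
    calc ν (f^[m + 1] x) = ν (f^[m] (f x)) := by rw [Function.iterate_succ_apply]
      _ ≤ c ^ m * ν (f x) := ih (hS hx)
      _ ≤ c ^ m * (c * ν x) := mul_le_mul_of_nonneg_left (hf x hx) zero_le
      _ = c ^ (m + 1) * ν x := by ring

variable {b : ℕ → ℝ≥0}

theorem iterate_le_mul_pow_div (hS : Set.MapsTo f S S) (hb : Antitone b)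
    (hν : ∀ x ∈ S, ∀ k, ν (f^[k] x) ≤ b k * ν x) {K : ℕ} {c : ℝ≥0} (hK : b K ≤ c)
    (k : ℕ) {x : α} (hx : x ∈ S) :
    ν (f^[k] x) ≤ b 0 * c ^ (k / K) * ν x := by
  have hblock : ν (f^[K * (k / K)] x) ≤ c ^ (k / K) * ν x := by
    rw [Function.iterate_mul]
    exact iterate_le_pow_mul (hS.iterate K)
      (fun y hy => (hν y hy K).trans (mul_le_mul_of_nonneg_right hK zero_le)) _ hx
  calc ν (f^[k] x) = ν (f^[k % K] (f^[K * (k / K)] x)) := by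
        rw [← Function.iterate_add_apply, Nat.mod_add_div]
    _ ≤ b (k % K) * ν (f^[K * (k / K)] x) := hν _ ((hS.iterate _) hx) _
    _ ≤ b 0 * (c ^ (k / K) * ν x) := mul_le_mul' (hb (Nat.zero_le _)) hblock
    _ = b 0 * c ^ (k / K) * ν x := (mul_assoc _ _ _).symm

theorem exists_exponential_bound_of_tendsto_zero (hS : Set.MapsTo f S S) (hb : Antitone b)
    (hb₀ : Tendsto b atTop (nhds 0)) (hν : ∀ x ∈ S, ∀ k, ν (f^[k] x) ≤ b k * ν x) :
    ∃ M : ℝ≥0, 0 < M ∧ ∃ a : ℝ≥0, 0 < a ∧ a < 1 ∧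
      ∀ x ∈ S, ∀ k : ℕ, ν (f^[k] x) ≤ M * a ^ k * ν x := by
  obtain ⟨K, hbK, hK⟩ :=
    ((hb₀.eventually (ge_mem_nhds (by norm_num : (0 : ℝ≥0) < 2⁻¹))).and
      (eventually_gt_atTop 0)).exists
  set a : ℝ≥0 := (2⁻¹ : ℝ≥0) ^ (K⁻¹ : ℝ)
  have haK : a ^ K = 2⁻¹ := NNReal.rpow_inv_natCast_pow _ hK.ne'
  have ha₁ : a < 1 := by
    rw [← pow_lt_one_iff_of_nonneg zero_le hK.ne', haK]
    norm_num
  refine ⟨2 * b 0 + 1, by positivity, a, NNReal.rpow_pos (by norm_num), ha₁, ?_⟩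
  intro x hx k
  have hdecay : (2⁻¹ : ℝ≥0) ^ (k / K) ≤ 2 * a ^ k := by
    have := pow_div_mul_pow_le_pow zero_le ha₁.le hK k
    rw [haK] at this
    calc (2⁻¹ : ℝ≥0) ^ (k / K) = 2 * ((2⁻¹ : ℝ≥0) ^ (k / K) * 2⁻¹) := by
          rw [mul_comm, mul_assoc, inv_mul_cancel₀ two_ne_zero, mul_one]
      _ ≤ 2 * a ^ k := mul_le_mul_of_nonneg_left this zero_le
  calc ν (f^[k] x) ≤ b 0 * (2⁻¹ : ℝ≥0) ^ (k / K) * ν x :=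
        iterate_le_mul_pow_div hS hb hν hbK k hx
    _ ≤ b 0 * (2 * a ^ k) * ν x := by gcongr
    _ = 2 * b 0 * a ^ k * ν x := by ring
    _ ≤ (2 * b 0 + 1) * a ^ k * ν x := by gcongr; exact le_self_add

end IterateBounds

theorem UGAS_implies_UGES_general
    (Γ : (ℕ → ℝ≥0) → ℕ → ℝ≥0)
    (hmap : ∀ s, InLinf s → InLinf (Γ s))
    (b : ℕ → ℝ≥0) (hbanti : Antitone b) (hbto : Tendsto b atTop (nhds 0))
    (hUGAS : ∀ s, InLinf s → ∀ k : ℕ, lnorm (Γ^[k] s) ≤ b k * lnorm s) :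
    ∃ M : ℝ≥0, 0 < M ∧ ∃ a : ℝ≥0, 0 < a ∧ a < 1 ∧
      ∀ s, InLinf s → ∀ k : ℕ, lnorm (Γ^[k] s) ≤ M * a ^ k * lnorm s :=
  exists_exponential_bound_of_tendsto_zero (S := {s | InLinf s}) hmap hbanti hbto hUGAS

/-- For a homogeneous-of-degree-one operator `Γ : ℓ∞⁺ → ℓ∞⁺`, uniform global
asymptotic stability (a nonincreasing bound `b k → 0` with `‖Γᵏ(s)‖ ≤ b k · ‖s‖`) implies
uniform global exponential stability (`‖Γᵏ(s)‖ ≤ M aᵏ ‖s‖` with `M > 0`, `a ∈ (0,1)`). -/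
theorem UGAS_implies_UGES
    (Γ : (ℕ → ℝ≥0) → ℕ → ℝ≥0)
    (hmap : ∀ s, InLinf s → InLinf (Γ s))
    (hhom : ∀ (c : ℝ≥0) (s : ℕ → ℝ≥0), InLinf s → ∀ i, Γ (fun j => c * s j) i = c * Γ s i)
    (b : ℕ → ℝ≥0) (hbanti : Antitone b) (hbto : Tendsto b atTop (nhds 0))
    (hUGAS : ∀ s, InLinf s → ∀ k : ℕ, lnorm (Γ^[k] s) ≤ b k * lnorm s) :
    ∃ M : ℝ≥0, 0 < M ∧ ∃ a : ℝ≥0, 0 < a ∧ a < 1 ∧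
      ∀ s, InLinf s → ∀ k : ℕ, lnorm (Γ^[k] s) ≤ M * a ^ k * lnorm s :=
  UGAS_implies_UGES_general Γ hmap b hbanti hbto hUGAS
end

section
/- Let ℓ∞⁺ denote the set of bounded sequences s : ℕ → ℝ≥0 with norm ‖s‖ := sup_{i∈ℕ} s i, and let Γ : ℓ∞⁺ → ℓ∞⁺ be monotone and homogeneous of degree one. If ‖Γⁿ(𝟙)‖ < 1 for some n ≥ 1, then there exist M > 0 and a ∈ (0,1) such that ‖Γᵏ(s)‖ ≤ M aᵏ ‖s‖ for all s ∈ ℓ∞⁺ and all k ∈ ℕ. -/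
open scoped NNReal

/-- The constant sequence `𝟙`. -/
def oneSeq : ℕ → ℝ≥0 := fun _ => 1

lemma le_lnorm (s : ℕ → ℝ≥0) (hs : InLinf s) (i : ℕ) : s i ≤ lnorm s :=
  le_ciSup hs i

lemma lnorm_le (s : ℕ → ℝ≥0) (c : ℝ≥0) (h : ∀ i, s i ≤ c) : lnorm s ≤ c :=
  ciSup_le h

lemma inLinf_oneSeq : InLinf oneSeq := ⟨1, by rintro x ⟨i, rfl⟩; exact le_rfl⟩

lemma lnorm_oneSeq : lnorm oneSeq = 1 := ciSup_const

lemma inLinf_smul (c : ℝ≥0) (s : ℕ → ℝ≥0) (hs : InLinf s) :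
    InLinf (fun j => c * s j) :=
  ⟨c * lnorm s, by rintro x ⟨i, rfl⟩; exact mul_le_mul_right (le_lnorm s hs i) c⟩

/-- For a monotone, homogeneous-of-degree-one operator `Γ : ℓ∞⁺ → ℓ∞⁺`,
if `‖Γⁿ(𝟙)‖ < 1` for some `n ≥ 1`, then the induced discrete-time system is uniformly
globally exponentially stable: `‖Γᵏ(s)‖ ≤ M aᵏ ‖s‖` with `M > 0` and `a ∈ (0,1)`. -/
theorem iterate_one_norm_lt_one_implies_UGES
    (Γ : (ℕ → ℝ≥0) → ℕ → ℝ≥0)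
    (hmap : ∀ s, InLinf s → InLinf (Γ s))
    (hmono : ∀ r s, InLinf r → InLinf s → (∀ i, r i ≤ s i) → ∀ i, Γ r i ≤ Γ s i)
    (hhom : ∀ (c : ℝ≥0) (s : ℕ → ℝ≥0), InLinf s → ∀ i, Γ (fun j => c * s j) i = c * Γ s i)
    (n : ℕ) (hn : 1 ≤ n) (hlt : lnorm (Γ^[n] oneSeq) < 1) :
    ∃ M : ℝ≥0, 0 < M ∧ ∃ a : ℝ≥0, 0 < a ∧ a < 1 ∧
      ∀ s, InLinf s → ∀ k : ℕ, lnorm (Γ^[k] s) ≤ M * a ^ k * lnorm s := by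
  set ρ : ℝ≥0 := lnorm (Γ^[n] oneSeq) ⊔ 2⁻¹ with hρdef
  have hρ0 : (0:ℝ≥0) < ρ := lt_of_lt_of_le (by norm_num) le_sup_right
  have hρ1 : ρ < 1 := sup_lt_iff.2 ⟨hlt, by rw [← NNReal.coe_lt_coe]; norm_num⟩
  -- iterates preserve ℓ∞⁺
  have hmapk : ∀ k s, InLinf s → InLinf (Γ^[k] s) := by
    intro k
    induction k with
    | zero => intro s hs; simpa using hs
    | succ k ih =>
      intro s hs
      rw [Function.iterate_succ_apply']
      exact hmap _ (ih s hs)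
  -- iterates are monotone
  have hmonok : ∀ k r s, InLinf r → InLinf s → (∀ i, r i ≤ s i) →
      ∀ i, Γ^[k] r i ≤ Γ^[k] s i := by
    intro k
    induction k with
    | zero => intro r s _ _ h i; simpa using h i
    | succ k ih =>
      intro r s hr hs h i
      rw [Function.iterate_succ_apply', Function.iterate_succ_apply']
      exact hmono _ _ (hmapk k r hr) (hmapk k s hs) (ih r s hr hs h) i
  -- iterates are homogeneous
  have hhomk : ∀ k (c : ℝ≥0) s, InLinf s →
      ∀ i, Γ^[k] (fun j => c * s j) i = c * Γ^[k] s i := by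
    intro k
    induction k with
    | zero => intro c s _ i; simp
    | succ k ih =>
      intro c s hs i
      rw [Function.iterate_succ_apply', Function.iterate_succ_apply']
      have : Γ^[k] (fun j => c * s j) = fun j => c * Γ^[k] s j :=
        funext (ih c s hs)
      rw [this]
      exact hhom c _ (hmapk k s hs) i
  -- reduce to the constant sequence
  have bound1 : ∀ s, InLinf s → ∀ k,
      lnorm (Γ^[k] s) ≤ lnorm s * lnorm (Γ^[k] oneSeq) := by
    intro s hs k
    apply lnorm_le
    intro i
    have h1 : ∀ j, s j ≤ lnorm s * oneSeq j := by
      intro j; simpa [oneSeq] using le_lnorm s hs j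
    have h2 : Γ^[k] s i ≤ Γ^[k] (fun j => lnorm s * oneSeq j) i :=
      hmonok k s _ hs (inLinf_smul _ _ inLinf_oneSeq) h1 i
    calc Γ^[k] s i ≤ lnorm s * Γ^[k] oneSeq i := by
          rw [← hhomk k (lnorm s) oneSeq inLinf_oneSeq i]; exact h2
      _ ≤ lnorm s * lnorm (Γ^[k] oneSeq) :=
          mul_le_mul_right (le_lnorm _ (hmapk k _ inLinf_oneSeq) i) _
  have hstep : ∀ i, Γ^[n] oneSeq i ≤ ρ := fun i =>
    le_trans (le_lnorm _ (hmapk n _ inLinf_oneSeq) i) le_sup_left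
  -- geometric decay along multiples of n
  have bound2 : ∀ q i, Γ^[q * n] oneSeq i ≤ ρ ^ q := by
    intro q
    induction q with
    | zero => intro i; simp [oneSeq]
    | succ q ih =>
      intro i
      have hq : (q + 1) * n = n + q * n := by ring
      rw [hq, Function.iterate_add_apply]
      have h1 : ∀ j, Γ^[q * n] oneSeq j ≤ ρ ^ q * oneSeq j := by
        intro j; simpa [oneSeq] using ih j
      have h2 : Γ^[n] (Γ^[q * n] oneSeq) i ≤ Γ^[n] (fun j => ρ ^ q * oneSeq j) i :=
        hmonok n _ _ (hmapk _ _ inLinf_oneSeq) (inLinf_smul _ _ inLinf_oneSeq) h1 i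
      calc Γ^[n] (Γ^[q * n] oneSeq) i ≤ ρ ^ q * Γ^[n] oneSeq i := by
            rw [← hhomk n (ρ ^ q) oneSeq inLinf_oneSeq i]; exact h2
        _ ≤ ρ ^ q * ρ := mul_le_mul_right (hstep i) _
        _ = ρ ^ (q + 1) := by ring
  set B : ℝ≥0 := (Finset.range n).sup (fun r => lnorm (Γ^[r] oneSeq)) ⊔ 1 with hBdef
  have hB1 : (1:ℝ≥0) ≤ B := le_sup_right
  -- full decay estimate for the constant sequence
  have bound3 : ∀ k, lnorm (Γ^[k] oneSeq) ≤ ρ ^ (k / n) * B := by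
    intro k
    have hk : k = k % n + (k / n) * n := by
      rw [Nat.mod_add_div']
    have h1 : ∀ j, Γ^[(k / n) * n] oneSeq j ≤ ρ ^ (k / n) * oneSeq j := by
      intro j; simpa [oneSeq] using bound2 (k / n) j
    have heq : Γ^[k] oneSeq = Γ^[k % n] (Γ^[k / n * n] oneSeq) := by
      conv_lhs => rw [hk]
      rw [Function.iterate_add_apply]
    have h2 : ∀ i, Γ^[k] oneSeq i ≤ ρ ^ (k / n) * Γ^[k % n] oneSeq i := by
      intro i
      rw [heq]
      have h3 : Γ^[k % n] (Γ^[(k / n) * n] oneSeq) i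
          ≤ Γ^[k % n] (fun j => ρ ^ (k / n) * oneSeq j) i :=
        hmonok _ _ _ (hmapk _ _ inLinf_oneSeq) (inLinf_smul _ _ inLinf_oneSeq) h1 i
      rw [← hhomk (k % n) (ρ ^ (k / n)) oneSeq inLinf_oneSeq i]
      exact h3
    apply lnorm_le
    intro i
    refine le_trans (h2 i) ?_
    refine mul_le_mul_right ?_ _
    refine le_trans (le_lnorm _ (hmapk _ _ inLinf_oneSeq) i) ?_
    refine le_trans ?_ le_sup_left
    exact Finset.le_sup (f := fun r => lnorm (Γ^[r] oneSeq))
      (Finset.mem_range.2 (Nat.mod_lt k (lt_of_lt_of_le one_pos hn)))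
  -- choose M and a
  refine ⟨B / ρ, ?_, ρ ^ ((n : ℝ)⁻¹), ?_, ?_, ?_⟩
  · exact div_pos (lt_of_lt_of_le one_pos hB1) hρ0
  · exact NNReal.rpow_pos hρ0
  · exact NNReal.rpow_lt_one hρ1 (by positivity)
  · intro s hs k
    have key : ρ ^ (k / n) * B ≤ B / ρ * (ρ ^ ((n : ℝ)⁻¹)) ^ k := by
      have hexp : (ρ ^ ((n : ℝ)⁻¹)) ^ k = ρ ^ ((k : ℝ) * (n : ℝ)⁻¹) := by
        rw [mul_comm, NNReal.rpow_mul_natCast]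
      have hn' : (0:ℝ) < (n : ℝ) := by exact_mod_cast lt_of_lt_of_le one_pos hn
      have hkle : (k : ℝ) * (n : ℝ)⁻¹ ≤ ((k / n + 1 : ℕ) : ℝ) := by
        rw [mul_inv_le_iff₀ hn']
        have hmod := Nat.mod_lt k (lt_of_lt_of_le one_pos hn)
        have hkeq := Nat.mod_add_div' k n
        have : k < (k / n + 1) * n := by
          calc k = k % n + k / n * n := hkeq.symm
            _ < n + k / n * n := by omega
            _ = (k / n + 1) * n := by ring
        exact_mod_cast this.le
      have hpow : ρ ^ (k / n + 1) ≤ (ρ ^ ((n : ℝ)⁻¹)) ^ k := by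
        rw [hexp, ← NNReal.rpow_natCast ρ (k / n + 1)]
        exact NNReal.rpow_le_rpow_of_exponent_ge hρ0 hρ1.le hkle
      calc ρ ^ (k / n) * B = B / ρ * (ρ ^ (k / n) * ρ) := by
            field_simp
        _ = B / ρ * ρ ^ (k / n + 1) := by ring
        _ ≤ B / ρ * (ρ ^ ((n : ℝ)⁻¹)) ^ k := mul_le_mul_right hpow _
    calc lnorm (Γ^[k] s) ≤ lnorm s * lnorm (Γ^[k] oneSeq) := bound1 s hs k
      _ ≤ lnorm s * (ρ ^ (k / n) * B) := mul_le_mul_right (bound3 k) _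
      _ ≤ lnorm s * (B / ρ * (ρ ^ ((n : ℝ)⁻¹)) ^ k) := mul_le_mul_right key _
      _ = B / ρ * (ρ ^ ((n : ℝ)⁻¹)) ^ k * lnorm s := by ring
end

section
/- Let n ≥ 1 and let Γ : (Fin n → ℝ≥0) → (Fin n → ℝ≥0) be continuous, monotone, subadditive and homogeneous of degree one. Then ‖Γ^m(𝟙)‖ < 1 for some m ∈ ℕ (equivalently, the spectral radius r(Γ) < 1) if and only if there exist functions σ_1,…,σ_n of class K∞ and ρ of class K∞ such that Γ(σ(r)) ≤ (id + ρ)⁻¹(σ(r)) componentwise for all r ≥ 0, where σ(r) := (σ_1(r),…,σ_n(r)); i.e., if and only if there exists a path of strict decay with respect to Γ. -/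
/-!
If `‖Γ^m 𝟙‖ < 1`, choose `μ < 1` with `μ^m ≥ ‖Γ^m 𝟙‖`; subadditivity and homogeneity make
`v = ∑_{k<m} μ^{-k} Γ^k 𝟙 ≥ 𝟙` a vector with `Γ v ≤ μ v`, and the ray `t ↦ t v` is a path of
strict decay with linear `ρ t = (μ⁻¹ - 1) t`. Conversely, on a path of strict decay take `r` so
large that `v = σ(r) ≥ 𝟙`; since `(id + ρ)⁻¹ y < y` for `y > 0`, we get `Γ v < v` componentwise,
hence `Γ v ≤ θ v` for some `θ < 1` because there are finitely many components, and monotonicity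
gives `Γ^m 𝟙 ≤ Γ^m v ≤ θ^m v → 0`.
-/

open scoped NNReal

/-- A function `ℝ≥0 → ℝ≥0` of class `K∞`: continuous, strictly increasing, vanishing at `0`,
and tending to `∞`. -/
def IsKInf (f : ℝ≥0 → ℝ≥0) : Prop :=
  Continuous f ∧ StrictMono f ∧ f 0 = 0 ∧ Filter.Tendsto f Filter.atTop Filter.atTop

open scoped Topology
open Finset Filter Function

theorem iSup_lt_iff_forall_lt_of_finite {ι : Type*} [Finite ι] {f : ι → ℝ≥0} {a : ℝ≥0}
    (ha : 0 < a) : (⨆ i, f i) < a ↔ ∀ i, f i < a := by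
  refine ⟨fun h i => (le_ciSup (Set.finite_range f).bddAbove i).trans_lt h, fun h => ?_⟩
  rcases isEmpty_or_nonempty ι with hι | hι
  · rwa [ciSup_of_empty]
  · obtain ⟨i, hi⟩ := exists_eq_ciSup_of_finite (f := f)
    exact hi ▸ h i

theorem exists_lt_one_le_smul_of_forall_lt {ι : Type*} [Finite ι] {w v : ι → ℝ≥0}
    (h : ∀ i, w i < v i) : ∃ θ : ℝ≥0, θ < 1 ∧ w ≤ θ • v := by
  have := Fintype.ofFinite ι
  have hv : ∀ i, v i ≠ 0 := fun i => (zero_le.trans_lt (h i)).ne'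
  refine ⟨univ.sup fun i => w i / v i, (Finset.sup_lt_iff zero_lt_one).2 fun i _ =>
    (div_lt_one (pos_iff_ne_zero.2 (hv i))).2 (h i), fun i => ?_⟩
  calc w i = w i / v i * v i := (div_mul_cancel₀ _ (hv i)).symm
    _ ≤ _ := mul_le_mul_of_nonneg_right (le_sup (f := fun i => w i / v i) (mem_univ i)) zero_le

section Operator

variable {ι : Type*} {Γ : (ι → ℝ≥0) → ι → ℝ≥0}

theorem map_zero_of_homogeneous (hhom : ∀ (c : ℝ≥0) s, Γ (c • s) = c • Γ s) : Γ 0 = 0 := by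
  simpa using hhom 0 0

theorem iterate_le_pow_smul (hmono : Monotone Γ) (hhom : ∀ (c : ℝ≥0) s, Γ (c • s) = c • Γ s)
    {θ : ℝ≥0} {v : ι → ℝ≥0} (hv : Γ v ≤ θ • v) (m : ℕ) : Γ^[m] v ≤ θ ^ m • v := by
  induction m with
  | zero => simp
  | succ m ih =>
    calc Γ^[m + 1] v = Γ (Γ^[m] v) := iterate_succ_apply' Γ m v
      _ ≤ Γ (θ ^ m • v) := hmono ih
      _ = θ ^ m • Γ v := hhom _ _
      _ ≤ θ ^ m • θ • v := smul_le_smul_of_nonneg_left hv zero_le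
      _ = θ ^ (m + 1) • v := by rw [smul_smul, pow_succ]

theorem map_sum_inv_pow_smul_iterate_le_smul (hsub : ∀ r s, Γ (r + s) ≤ Γ r + Γ s)
    (hhom : ∀ (c : ℝ≥0) s, Γ (c • s) = c • Γ s) {μ : ℝ≥0} (hμ : μ ≠ 0) {u : ι → ℝ≥0} {m : ℕ}
    (hu : Γ^[m] u ≤ μ ^ m • u) :
    Γ (∑ k ∈ range m, μ⁻¹ ^ k • Γ^[k] u) ≤ μ • ∑ k ∈ range m, μ⁻¹ ^ k • Γ^[k] u := by
  set w : ℕ → ι → ℝ≥0 := fun k => μ⁻¹ ^ k • Γ^[k] u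
  have hw : ∀ k, Γ (w k) = μ • w (k + 1) := fun k => by
    simp only [w, hhom, iterate_succ_apply', smul_smul, pow_succ,
      mul_comm μ, mul_assoc _ _ μ, inv_mul_cancel₀ hμ, mul_one]
  have hlast : w m ≤ w 0 :=
    calc w m ≤ μ⁻¹ ^ m • μ ^ m • u := smul_le_smul_of_nonneg_left hu zero_le
      _ = w 0 := by simp [w, inv_pow, inv_smul_smul₀ (pow_ne_zero m hμ)]
  have hshift : ∑ k ∈ range m, w (k + 1) ≤ ∑ k ∈ range m, w k := by
    refine le_of_add_le_add_right (a := w 0) ?_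
    rw [← sum_range_succ', sum_range_succ]
    exact add_le_add_right hlast _
  calc Γ (∑ k ∈ range m, w k) ≤ ∑ k ∈ range m, Γ (w k) :=
        le_sum_of_subadditive Γ (map_zero_of_homogeneous hhom).le hsub _ _
    _ = μ • ∑ k ∈ range m, w (k + 1) := by simp only [hw, smul_sum]
    _ ≤ μ • ∑ k ∈ range m, w k := smul_le_smul_of_nonneg_left hshift zero_le

theorem exists_le_smul_of_iterate_one_lt_one [Finite ι] (hsub : ∀ r s, Γ (r + s) ≤ Γ r + Γ s)
    (hhom : ∀ (c : ℝ≥0) s, Γ (c • s) = c • Γ s) {m : ℕ} (hm : ∀ i, Γ^[m] 1 i < 1) :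
    ∃ μ : ℝ≥0, 0 < μ ∧ μ < 1 ∧ ∃ v : ι → ℝ≥0, (∀ i, 0 < v i) ∧ Γ v ≤ μ • v := by
  obtain rfl | hm0 := Nat.eq_zero_or_pos m
  · have : IsEmpty ι := ⟨fun i => (hm i).false⟩
    exact ⟨1 / 2, by norm_num, by norm_num, 1, isEmptyElim, fun i => isEmptyElim i⟩
  obtain ⟨θ, hθ0, hθ1, hθ⟩ : ∃ θ : ℝ≥0, 0 < θ ∧ θ < 1 ∧ Γ^[m] 1 ≤ θ • 1 := by
    have := Fintype.ofFinite ι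
    obtain ⟨θ, hsup, hθ1⟩ := exists_between ((Finset.sup_lt_iff zero_lt_one).2 fun i _ => hm i)
    exact ⟨θ, zero_le.trans_lt hsup, hθ1,
      fun i => by simpa using (le_sup (f := fun i => Γ^[m] 1 i) (mem_univ i)).trans hsup.le⟩
  have hμ0 : 0 < θ ^ (m⁻¹ : ℝ) := NNReal.rpow_pos hθ0
  refine ⟨_, hμ0, NNReal.rpow_lt_one hθ1 (by positivity), _, fun i => ?_,
    map_sum_inv_pow_smul_iterate_le_smul hsub hhom hμ0.ne'
      (by rwa [NNReal.rpow_inv_natCast_pow θ hm0.ne'])⟩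
  have h0 := single_le_sum (f := fun k => ((θ ^ (m⁻¹ : ℝ))⁻¹ ^ k • Γ^[k] 1) i)
    (fun _ _ => zero_le) (mem_range.2 hm0)
  rw [Finset.sum_apply]
  exact zero_lt_one.trans_le (by simpa using h0)

theorem eventually_iterate_one_lt_one [Finite ι] (hmono : Monotone Γ)
    (hhom : ∀ (c : ℝ≥0) s, Γ (c • s) = c • Γ s) {θ : ℝ≥0} {v : ι → ℝ≥0} (hv : 1 ≤ v)
    (hθ : θ < 1) (hΓv : Γ v ≤ θ • v) : ∀ᶠ m in atTop, ∀ i, Γ^[m] 1 i < 1 := by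
  refine eventually_all.2 fun i => ?_
  have hlim : Tendsto (fun m => θ ^ m * v i) atTop (𝓝 0) := by
    simpa using (NNReal.tendsto_pow_atTop_nhds_zero_of_lt_one hθ).mul_const (v i)
  filter_upwards [hlim.eventually_lt_const zero_lt_one] with m hm
  calc Γ^[m] 1 i ≤ Γ^[m] v i := hmono.iterate m hv i
    _ ≤ θ ^ m * v i := iterate_le_pow_smul hmono hhom hΓv m i
    _ < 1 := hm

end Operator

theorem isKInf_id : IsKInf id := ⟨continuous_id, strictMono_id, rfl, tendsto_id⟩

theorem isKInf_mul_const {c : ℝ≥0} (hc : 0 < c) : IsKInf (· * c) :=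
  ⟨continuous_id.mul continuous_const, fun _ _ h => mul_lt_mul_of_pos_right h hc, zero_mul c,
    tendsto_id.atTop_mul_const hc⟩

namespace IsKInf

theorem add {f g : ℝ≥0 → ℝ≥0} (hf : IsKInf f) (hg : IsKInf g) : IsKInf fun t => f t + g t :=
  ⟨hf.1.add hg.1, hf.2.1.add hg.2.1, by simp [hf.2.2.1, hg.2.2.1],
    tendsto_atTop_mono (fun _ => le_self_add) hf.2.2.2⟩

theorem surjective {f : ℝ≥0 → ℝ≥0} (hf : IsKInf f) : Surjective f :=
  hf.1.surjective hf.2.2.2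
    (hf.2.1.monotone.tendsto_atBot_atBot fun _ => ⟨0, hf.2.2.1.trans_le zero_le⟩)

theorem invFun_id_add_lt {ρ : ℝ≥0 → ℝ≥0} (hρ : IsKInf ρ) {y : ℝ≥0} (hy : y ≠ 0) :
    invFun (fun t => t + ρ t) y < y := by
  set x := invFun (fun t => t + ρ t) y
  have hx : x + ρ x = y := invFun_eq ((isKInf_id.add hρ).surjective y)
  have hx0 : x ≠ 0 := by
    rintro h
    rw [h, hρ.2.2.1, add_zero] at hx
    exact hy hx.symm
  calc x < x + ρ x := lt_add_of_pos_right x (hρ.2.2.1 ▸ hρ.2.1 (pos_iff_ne_zero.2 hx0))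
    _ = y := hx

end IsKInf

theorem invFun_add_mul_inv_sub_one {μ : ℝ≥0} (hμ0 : 0 < μ) (hμ1 : μ ≤ 1) (y : ℝ≥0) :
    invFun (fun t => t + t * (μ⁻¹ - 1)) y = y * μ := by
  have hf : (fun t => t + t * (μ⁻¹ - 1)) = (· * μ⁻¹) := funext fun t => by
    rw [← mul_one_add, add_tsub_cancel_of_le ((one_le_inv₀ hμ0).2 hμ1)]
  rw [hf]
  calc invFun (· * μ⁻¹) y = invFun (· * μ⁻¹) (y * μ * μ⁻¹) := by
        rw [mul_inv_cancel_right₀ hμ0.ne']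
    _ = y * μ := leftInverse_invFun (mul_left_injective₀ (inv_ne_zero hμ0.ne')) (y * μ)

def IsStrictDecayPath {ι : Type*} (Γ : (ι → ℝ≥0) → ι → ℝ≥0) (σ : ι → ℝ≥0 → ℝ≥0)
    (ρ : ℝ≥0 → ℝ≥0) : Prop :=
  (∀ i, IsKInf (σ i)) ∧ IsKInf ρ ∧
    ∀ (r : ℝ≥0) (i : ι), Γ (fun k => σ k r) i ≤ invFun (fun t : ℝ≥0 => t + ρ t) (σ i r)

section Path

variable {ι : Type*} {Γ : (ι → ℝ≥0) → ι → ℝ≥0}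

theorem exists_isStrictDecayPath_of_le_smul (hhom : ∀ (c : ℝ≥0) s, Γ (c • s) = c • Γ s)
    {μ : ℝ≥0} (hμ0 : 0 < μ) (hμ1 : μ < 1) {v : ι → ℝ≥0} (hv : ∀ i, 0 < v i)
    (hΓv : Γ v ≤ μ • v) : ∃ σ ρ, IsStrictDecayPath Γ σ ρ := by
  refine ⟨fun i t => t * v i, (· * (μ⁻¹ - 1)), fun i => isKInf_mul_const (hv i),
    isKInf_mul_const (tsub_pos_of_lt ((one_lt_inv₀ hμ0).2 hμ1)), fun r i => ?_⟩
  rw [invFun_add_mul_inv_sub_one hμ0 hμ1.le]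
  calc Γ (r • v) i = r * Γ v i := congrFun (hhom r v) i
    _ ≤ r * (μ * v i) := mul_le_mul_of_nonneg_left (hΓv i) zero_le
    _ = r * v i * μ := by ring

theorem IsStrictDecayPath.exists_one_le_forall_lt [Finite ι] {σ : ι → ℝ≥0 → ℝ≥0}
    {ρ : ℝ≥0 → ℝ≥0} (h : IsStrictDecayPath Γ σ ρ) : ∃ v : ι → ℝ≥0, 1 ≤ v ∧ ∀ i, Γ v i < v i := by
  obtain ⟨hσ, hρ, hdec⟩ := h
  obtain ⟨r, hr⟩ := (eventually_all.2 fun i => (hσ i).2.2.2.eventually_ge_atTop 1).exists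
  exact ⟨fun k => σ k r, hr,
    fun i => (hdec r i).trans_lt (hρ.invFun_id_add_lt (one_pos.trans_le (hr i)).ne')⟩

end Path

theorem finite_dim_spectral_radius_iff_path_of_strict_decay_general
    (n : ℕ)
    (Γ : (Fin n → ℝ≥0) → Fin n → ℝ≥0)
    (hmono : ∀ r s : Fin n → ℝ≥0, (∀ i, r i ≤ s i) → ∀ i, Γ r i ≤ Γ s i)
    (hsub : ∀ (r s : Fin n → ℝ≥0) (i : Fin n), Γ (fun k => r k + s k) i ≤ Γ r i + Γ s i)
    (hhom : ∀ (c : ℝ≥0) (s : Fin n → ℝ≥0) (i : Fin n), Γ (fun k => c * s k) i = c * Γ s i) :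
    (∃ m : ℕ, (⨆ i, Γ^[m] (fun _ => 1) i) < 1) ↔
      ∃ σ : Fin n → ℝ≥0 → ℝ≥0, ∃ ρ : ℝ≥0 → ℝ≥0,
        (∀ i, IsKInf (σ i)) ∧ IsKInf ρ ∧
        ∀ (r : ℝ≥0) (i : Fin n),
          Γ (fun k => σ k r) i ≤ Function.invFun (fun t : ℝ≥0 => t + ρ t) (σ i r) := by
  have hmono' : Monotone Γ := fun r s h => hmono r s h
  have hsub' : ∀ r s, Γ (r + s) ≤ Γ r + Γ s := fun r s => hsub r s
  have hhom' : ∀ (c : ℝ≥0) s, Γ (c • s) = c • Γ s := fun c s => funext (hhom c s)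
  simp only [iSup_lt_iff_forall_lt_of_finite zero_lt_one]
  constructor
  · rintro ⟨m, hm⟩
    obtain ⟨μ, hμ0, hμ1, v, hv, hΓv⟩ := exists_le_smul_of_iterate_one_lt_one hsub' hhom' hm
    exact exists_isStrictDecayPath_of_le_smul hhom' hμ0 hμ1 hv hΓv
  · rintro ⟨σ, ρ, hpath⟩
    obtain ⟨v, hv, hΓv⟩ := IsStrictDecayPath.exists_one_le_forall_lt (Γ := Γ) hpath
    obtain ⟨θ, hθ, hΓθ⟩ := exists_lt_one_le_smul_of_forall_lt hΓv
    exact (eventually_iterate_one_lt_one hmono' hhom' hv hθ hΓθ).exists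

/-- Finite-dimensional case: for a continuous, monotone, subadditive,
homogeneous-of-degree-one operator `Γ` on `Fin n → ℝ≥0`, the spectral radius condition
(`‖Γ^m(𝟙)‖ < 1` for some `m`) holds if and only if there exists a path of strict decay
with respect to `Γ`: functions `σ_1, …, σ_n` of class `K∞` and `ρ` of class `K∞` with
`Γ(σ(r)) ≤ (id + ρ)⁻¹ (σ(r))` componentwise for all `r ≥ 0`. -/
theorem finite_dim_spectral_radius_iff_path_of_strict_decay
    (n : ℕ) (hn : 1 ≤ n)
    (Γ : (Fin n → ℝ≥0) → Fin n → ℝ≥0)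
    (hcont : Continuous Γ)
    (hmono : ∀ r s : Fin n → ℝ≥0, (∀ i, r i ≤ s i) → ∀ i, Γ r i ≤ Γ s i)
    (hsub : ∀ (r s : Fin n → ℝ≥0) (i : Fin n), Γ (fun k => r k + s k) i ≤ Γ r i + Γ s i)
    (hhom : ∀ (c : ℝ≥0) (s : Fin n → ℝ≥0) (i : Fin n), Γ (fun k => c * s k) i = c * Γ s i) :
    (∃ m : ℕ, (⨆ i, Γ^[m] (fun _ => 1) i) < 1) ↔
      ∃ σ : Fin n → ℝ≥0 → ℝ≥0, ∃ ρ : ℝ≥0 → ℝ≥0,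
        (∀ i, IsKInf (σ i)) ∧ IsKInf ρ ∧
        ∀ (r : ℝ≥0) (i : Fin n),
          Γ (fun k => σ k r) i ≤ Function.invFun (fun t : ℝ≥0 => t + ρ t) (σ i r) :=
  finite_dim_spectral_radius_iff_path_of_strict_decay_general n Γ hmono hsub hhom
end

section
/- Let (E_i)_{i∈ℕ} be a family of real normed spaces and let X be the ℓ∞-product, i.e., the space of x = (x_i)_{i∈ℕ} with x_i ∈ E_i and ‖x‖_X := sup_{i∈ℕ} ‖x_i‖ < ∞. Let ψ₁, ψ₂ : ℝ≥0 → ℝ≥0 be continuous, strictly increasing and vanishing at 0 (class K∞), and let V_i : E_i → ℝ≥0 satisfy ψ₁(‖x_i‖) ≤ V_i(x_i) ≤ ψ₂(‖x_i‖) for all i ∈ ℕ and x_i ∈ E_i. Let s⁰ : ℕ → ℝ satisfy 0 < s_min ≤ s⁰_i ≤ s_max for all i. Then the function V(x) := sup_{i∈ℕ} V_i(x_i)/s⁰_i satisfies (1/s_max)·ψ₁(‖x‖_X) ≤ V(x) ≤ (1/s_min)·ψ₂(‖x‖_X) for all x ∈ X. -/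
open scoped NNReal

open Set

namespace NNReal

variable {ι : Type*} {a v s : ι → ℝ≥0} {ψ : ℝ≥0 → ℝ≥0} {smin smax : ℝ≥0}

theorem div_le_div_ciSup_of_le (hψ : Monotone ψ) (ha : BddAbove (range a))
    (hv : ∀ i, v i ≤ ψ (a i)) (hsmin : 0 < smin) (hs : ∀ i, smin ≤ s i) (i : ι) :
    v i / s i ≤ ψ (⨆ j, a j) / smin :=
  div_le_div₀ zero_le ((hv i).trans (hψ (le_ciSup ha i))) hsmin (hs i)

theorem div_le_ciSup_div_of_le [Nonempty ι] (hψc : Continuous ψ) (hψ : Monotone ψ)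
    (ha : BddAbove (range a)) (hv : ∀ i, ψ (a i) ≤ v i) (hs : ∀ i, 0 < s i ∧ s i ≤ smax)
    (hbdd : BddAbove (range fun i => v i / s i)) :
    ψ (⨆ i, a i) / smax ≤ ⨆ i, v i / s i := by
  rw [hψ.map_ciSup_of_continuousAt hψc.continuousAt ha, iSup_div]
  exact ciSup_mono hbdd fun i => div_le_div₀ zero_le (hv i) (hs i).1 (hs i).2

end NNReal

theorem composite_Lyapunov_coercivity_general
    (E : ℕ → Type*) [∀ i, NormedAddCommGroup (E i)]
    (ψ₁ ψ₂ : ℝ≥0 → ℝ≥0)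
    (hψ₁ : Continuous ψ₁ ∧ StrictMono ψ₁ ∧ ψ₁ 0 = 0 ∧
      Filter.Tendsto ψ₁ Filter.atTop Filter.atTop)
    (hψ₂ : Continuous ψ₂ ∧ StrictMono ψ₂ ∧ ψ₂ 0 = 0 ∧
      Filter.Tendsto ψ₂ Filter.atTop Filter.atTop)
    (V : ∀ i, E i → ℝ≥0)
    (hV : ∀ (i : ℕ) (xi : E i), ψ₁ ‖xi‖₊ ≤ V i xi ∧ V i xi ≤ ψ₂ ‖xi‖₊)
    (s0 : ℕ → ℝ≥0) (smin smax : ℝ≥0) (hsmin : 0 < smin)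
    (hs0 : ∀ i, smin ≤ s0 i ∧ s0 i ≤ smax)
    (x : ∀ i, E i) (hx : BddAbove (Set.range fun i => ‖x i‖₊)) :
    (1 / smax) * ψ₁ (⨆ i, ‖x i‖₊) ≤ (⨆ i, V i (x i) / s0 i) ∧
    (⨆ i, V i (x i) / s0 i) ≤ (1 / smin) * ψ₂ (⨆ i, ‖x i‖₊) := by
  have hterm := NNReal.div_le_div_ciSup_of_le hψ₂.2.1.monotone hx (fun i => (hV i (x i)).2)
    hsmin fun i => (hs0 i).1
  have hbdd : BddAbove (range fun i => V i (x i) / s0 i) := ⟨_, forall_mem_range.2 hterm⟩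
  rw [one_div_mul_eq_div, one_div_mul_eq_div]
  exact ⟨NNReal.div_le_ciSup_div_of_le hψ₁.1 hψ₁.2.1.monotone hx (fun i => (hV i (x i)).1)
    (fun i => ⟨hsmin.trans_le (hs0 i).1, (hs0 i).2⟩) hbdd, ciSup_le hterm⟩

/-- Coercivity bounds for the composite Lyapunov function
`V(x) = ⨆ i, V_i(x_i) / s⁰_i` on the `ℓ∞`-product of normed spaces: if
`ψ₁(‖x_i‖) ≤ V_i(x_i) ≤ ψ₂(‖x_i‖)` with `ψ₁, ψ₂` of class `K∞` and
`0 < s_min ≤ s⁰_i ≤ s_max`, then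
`(1/s_max) ψ₁(‖x‖_X) ≤ V(x) ≤ (1/s_min) ψ₂(‖x‖_X)`. -/
theorem composite_Lyapunov_coercivity
    (E : ℕ → Type*) [∀ i, NormedAddCommGroup (E i)] [∀ i, NormedSpace ℝ (E i)]
    (ψ₁ ψ₂ : ℝ≥0 → ℝ≥0)
    (hψ₁ : Continuous ψ₁ ∧ StrictMono ψ₁ ∧ ψ₁ 0 = 0 ∧
      Filter.Tendsto ψ₁ Filter.atTop Filter.atTop)
    (hψ₂ : Continuous ψ₂ ∧ StrictMono ψ₂ ∧ ψ₂ 0 = 0 ∧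
      Filter.Tendsto ψ₂ Filter.atTop Filter.atTop)
    (V : ∀ i, E i → ℝ≥0)
    (hV : ∀ (i : ℕ) (xi : E i), ψ₁ ‖xi‖₊ ≤ V i xi ∧ V i xi ≤ ψ₂ ‖xi‖₊)
    (s0 : ℕ → ℝ≥0) (smin smax : ℝ≥0) (hsmin : 0 < smin)
    (hs0 : ∀ i, smin ≤ s0 i ∧ s0 i ≤ smax)
    (x : ∀ i, E i) (hx : BddAbove (Set.range fun i => ‖x i‖₊)) :
    (1 / smax) * ψ₁ (⨆ i, ‖x i‖₊) ≤ (⨆ i, V i (x i) / s0 i) ∧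
    (⨆ i, V i (x i) / s0 i) ≤ (1 / smin) * ψ₂ (⨆ i, ‖x i‖₊) :=
  composite_Lyapunov_coercivity_general E ψ₁ ψ₂ hψ₁ hψ₂ V hV s0 smin smax hsmin hs0 x hx
end

section
/- Let (E_i)_{i∈ℕ} be a family of real normed spaces and X their ℓ∞-product with norm ‖x‖_X := sup_{i∈ℕ} ‖x_i‖. Let ψ₁, ψ₂ be class-K∞ functions and V_i : E_i → ℝ≥0 continuous functions with ψ₁(‖x_i‖) ≤ V_i(x_i) ≤ ψ₂(‖x_i‖) for all i and x_i; let s⁰ : ℕ → ℝ with 0 < s_min ≤ s⁰_i ≤ s_max; assume that for every R > 0 there is L(R) > 0 such that every V_i is L(R)-Lipschitz on the closed ball of radius R of E_i. Define V(x) := sup_{i∈ℕ} V_i(x_i)/s⁰_i and, for μ > 1 and x ∈ X, the index set I(x) := { i ∈ ℕ : V(x) ≤ (μ/s⁰_i)·V_i(x_i) }. Then for every x ∈ X with x ≠ 0 there exists δ > 0 such that V(y) = sup_{i ∈ I(x)} V_i(y_i)/s⁰_i for all y ∈ X with ‖y − x‖_X < δ. -/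
open scoped NNReal

/-- Local representation of the composite Lyapunov function
`V(x) = ⨆ i, V_i(x_i) / s⁰_i` via the index set
`I(x) = {i : V(x) ≤ (μ / s⁰_i) V_i(x_i)}`: under coercivity bounds with class-`K∞`
functions, uniform bounds `0 < s_min ≤ s⁰_i ≤ s_max`, and uniform local Lipschitz bounds,
for every `x ≠ 0` there is `δ > 0` such that `V(y) = ⨆_{i ∈ I(x)} V_i(y_i) / s⁰_i`
for all `y` with `‖y - x‖_X < δ`. -/
theorem composite_Lyapunov_local_representation
    (E : ℕ → Type*) [∀ i, NormedAddCommGroup (E i)] [∀ i, NormedSpace ℝ (E i)]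
    (ψ₁ ψ₂ : ℝ≥0 → ℝ≥0)
    (hψ₁ : Continuous ψ₁ ∧ StrictMono ψ₁ ∧ ψ₁ 0 = 0 ∧
      Filter.Tendsto ψ₁ Filter.atTop Filter.atTop)
    (hψ₂ : Continuous ψ₂ ∧ StrictMono ψ₂ ∧ ψ₂ 0 = 0 ∧
      Filter.Tendsto ψ₂ Filter.atTop Filter.atTop)
    (V : ∀ i, E i → ℝ≥0)
    (hVcont : ∀ i, Continuous (V i))
    (hV : ∀ (i : ℕ) (xi : E i), ψ₁ ‖xi‖₊ ≤ V i xi ∧ V i xi ≤ ψ₂ ‖xi‖₊)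
    (s0 : ℕ → ℝ≥0) (smin smax : ℝ≥0) (hsmin : 0 < smin)
    (hs0 : ∀ i, smin ≤ s0 i ∧ s0 i ≤ smax)
    (hLip : ∀ R : ℝ, 0 < R → ∃ L : ℝ, 0 < L ∧ ∀ (i : ℕ) (xi yi : E i),
      ‖xi‖ ≤ R → ‖yi‖ ≤ R → |(V i xi : ℝ) - (V i yi : ℝ)| ≤ L * ‖xi - yi‖)
    (μ : ℝ≥0) (hμ : 1 < μ)
    (x : ∀ i, E i) (hx : BddAbove (Set.range fun i => ‖x i‖₊)) (hx0 : x ≠ 0) :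
    ∃ δ : ℝ, 0 < δ ∧ ∀ y : ∀ i, E i, BddAbove (Set.range fun i => ‖y i‖₊) →
      (∀ i, ‖y i - x i‖ < δ) →
      (⨆ i, V i (y i) / s0 i) =
        ⨆ i : {i : ℕ // (⨆ k, V k (x k) / s0 k) ≤ (μ / s0 i) * V i (x i)},
          V i.1 (y i.1) / s0 i.1 := by
  classical
  obtain ⟨hψ₂c, hψ₂m, hψ₂0, hψ₂t⟩ := hψ₂
  obtain ⟨hψ₁c, hψ₁m, hψ₁0, hψ₁t⟩ := hψ₁
  obtain ⟨Bx, hBx⟩ := hx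
  have hBx' : ∀ i, ‖x i‖₊ ≤ Bx := fun i => hBx ⟨i, rfl⟩
  have hs0pos : ∀ i, (0:ℝ≥0) < s0 i := fun i => lt_of_lt_of_le hsmin (hs0 i).1
  have hs0r : ∀ i, (0:ℝ) < (s0 i : ℝ) := fun i => hs0pos i
  -- generic bound on terms
  have hterm_bdd : ∀ (z : ∀ i, E i) (B : ℝ≥0), (∀ i, ‖z i‖₊ ≤ B) →
      ∀ i, V i (z i) / s0 i ≤ ψ₂ B / smin := by
    intro z B hB i
    rw [div_le_iff₀ (hs0pos i)]
    calc V i (z i) ≤ ψ₂ B := (hV i (z i)).2.trans (hψ₂m.monotone (hB i))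
      _ = ψ₂ B / smin * smin := by rw [div_mul_cancel₀ _ hsmin.ne']
      _ ≤ ψ₂ B / smin * s0 i := by gcongr; exact (hs0 i).1
  have hbddx : BddAbove (Set.range fun i => V i (x i) / s0 i) :=
    ⟨ψ₂ Bx / smin, by rintro _ ⟨i, rfl⟩; exact hterm_bdd x Bx hBx' i⟩
  set W : ℝ≥0 := ⨆ k, V k (x k) / s0 k with hWdef
  -- W > 0
  have hWpos : 0 < W := by
    obtain ⟨j, hj⟩ : ∃ j, x j ≠ 0 := by
      by_contra h
      push_neg at h
      exact hx0 (funext h)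
    have h1 : 0 < V j (x j) := by
      have : ψ₁ 0 < ψ₁ ‖x j‖₊ := hψ₁m (by simpa using hj)
      rw [hψ₁0] at this
      exact this.trans_le (hV j (x j)).1
    have h2 : 0 < V j (x j) / s0 j := div_pos h1 (hs0pos j)
    exact h2.trans_le (le_ciSup hbddx j)
  have hWr : (0:ℝ) < (W:ℝ) := hWpos
  have hμr : (1:ℝ) < (μ:ℝ) := by exact_mod_cast hμ
  set ε : ℝ := ((W:ℝ) - (W:ℝ)/(μ:ℝ)) / 3 with hεdef
  have hεpos : 0 < ε := by
    have : (W:ℝ)/(μ:ℝ) < (W:ℝ) := div_lt_self hWr hμr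
    simp only [hεdef]; linarith
  -- choose i* with large term
  obtain ⟨istar, histar⟩ : ∃ j, (W:ℝ) - ε < ((V j (x j) / s0 j : ℝ≥0) : ℝ) := by
    by_contra h
    push_neg at h
    have hW3 : W ≤ ((W:ℝ) - ε).toNNReal := by
      refine ciSup_le fun j => ?_
      rw [← NNReal.coe_le_coe, Real.coe_toNNReal _ (by linarith [h j, ((V j (x j) / s0 j : ℝ≥0)).coe_nonneg])]
      exact h j
    rw [← NNReal.coe_le_coe, Real.coe_toNNReal _ (by
      have := h 0; linarith [((V 0 (x 0) / s0 0 : ℝ≥0)).coe_nonneg])] at hW3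
    linarith
  have hεle : ε ≤ (W:ℝ) - (W:ℝ)/(μ:ℝ) := by
    simp only [hεdef]; linarith [hεpos]
  have histar_mem : W ≤ (μ / s0 istar) * V istar (x istar) := by
    rw [← NNReal.coe_le_coe]
    push_cast
    have h1 : (W:ℝ)/(μ:ℝ) ≤ (W:ℝ) - ε := by linarith
    have h2 : (W:ℝ)/(μ:ℝ) < (V istar (x istar) : ℝ) / (s0 istar : ℝ) := by
      calc (W:ℝ)/(μ:ℝ) ≤ (W:ℝ) - ε := h1
        _ < ((V istar (x istar) / s0 istar : ℝ≥0) : ℝ) := histar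
        _ = (V istar (x istar) : ℝ) / (s0 istar : ℝ) := by push_cast; ring
    have hμpos : (0:ℝ) < (μ:ℝ) := by linarith
    rw [div_lt_iff₀ hμpos] at h2
    calc (W:ℝ) ≤ (V istar (x istar) : ℝ) / (s0 istar : ℝ) * (μ:ℝ) := h2.le
      _ = (μ:ℝ) / (s0 istar : ℝ) * (V istar (x istar) : ℝ) := by ring
  haveI hInst : Nonempty {i : ℕ // W ≤ (μ / s0 i) * V i (x i)} := ⟨⟨istar, histar_mem⟩⟩
  -- Lipschitz constant on ball of radius R
  set R : ℝ := (Bx:ℝ) + 1 with hRdef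
  have hRpos : 0 < R := by positivity
  obtain ⟨L, hLpos, hL⟩ := hLip R hRpos
  refine ⟨min 1 (ε * (smin:ℝ) / L), lt_min one_pos (by positivity), ?_⟩
  intro y hy hyx
  obtain ⟨By, hBy⟩ := hy
  have hBy' : ∀ i, ‖y i‖₊ ≤ By := fun i => hBy ⟨i, rfl⟩
  have hbddy : BddAbove (Set.range fun i => V i (y i) / s0 i) :=
    ⟨ψ₂ By / smin, by rintro _ ⟨i, rfl⟩; exact hterm_bdd y By hBy' i⟩
  have hbddsub : BddAbove (Set.range fun i : {i : ℕ // W ≤ (μ / s0 i) * V i (x i)} =>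
      V i.1 (y i.1) / s0 i.1) :=
    ⟨ψ₂ By / smin, by rintro _ ⟨i, rfl⟩; exact hterm_bdd y By hBy' i.1⟩
  have hxR : ∀ i, ‖x i‖ ≤ R := by
    intro i
    have : (‖x i‖₊ : ℝ) ≤ (Bx : ℝ) := by exact_mod_cast hBx' i
    rw [coe_nnnorm] at this
    simp only [hRdef]; linarith
  have hyR : ∀ i, ‖y i‖ ≤ R := by
    intro i
    have h1 : ‖y i‖ - ‖x i‖ ≤ ‖y i - x i‖ := norm_sub_norm_le _ _
    have h2 : ‖y i - x i‖ < min 1 (ε * (smin:ℝ) / L) := hyx i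
    have h3 := hxR i
    have h4 : min 1 (ε * (smin:ℝ) / L) ≤ 1 := min_le_left _ _
    simp only [hRdef] at h3 ⊢
    have : (‖x i‖₊ : ℝ) ≤ (Bx : ℝ) := by exact_mod_cast hBx' i
    rw [coe_nnnorm] at this
    linarith
  -- per-term perturbation bound
  have hpert : ∀ i, |((V i (y i) : ℝ)) / (s0 i : ℝ) - ((V i (x i) : ℝ)) / (s0 i : ℝ)| ≤ ε := by
    intro i
    have h1 : |(V i (y i) : ℝ) - (V i (x i) : ℝ)| ≤ L * ‖y i - x i‖ :=
      hL i (y i) (x i) (hyR i) (hxR i)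
    have h2 : L * ‖y i - x i‖ ≤ L * (ε * (smin:ℝ) / L) := by
      have := (hyx i).le.trans (min_le_right _ _)
      gcongr
    have h3 : L * (ε * (smin:ℝ) / L) = ε * (smin:ℝ) := by field_simp
    have h4 : |(V i (y i) : ℝ) - (V i (x i) : ℝ)| ≤ ε * (s0 i : ℝ) := by
      have hsr : (smin:ℝ) ≤ (s0 i : ℝ) := by exact_mod_cast (hs0 i).1
      nlinarith
    rw [div_sub_div_same, abs_div, abs_of_pos (hs0r i), div_le_iff₀ (hs0r i)]
    linarith
  -- coercion helper
  have hcoe : ∀ (z : ∀ i, E i) (i : ℕ),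
      ((V i (z i) / s0 i : ℝ≥0) : ℝ) = (V i (z i) : ℝ) / (s0 i : ℝ) := by
    intro z i; push_cast; ring
  -- lower bound at istar
  have hstar_y : (W:ℝ) - 2*ε ≤ ((V istar (y istar) / s0 istar : ℝ≥0) : ℝ) := by
    have h1 := hpert istar
    rw [hcoe x istar] at histar
    rw [hcoe y istar]
    have := abs_le.mp h1
    linarith [this.1]
  refine le_antisymm ?_ ?_
  · refine ciSup_le fun i => ?_
    by_cases hi : W ≤ (μ / s0 i) * V i (x i)
    · exact le_ciSup hbddsub ⟨i, hi⟩
    · have hlt : ((μ / s0 i) * V i (x i) : ℝ≥0) < W := lt_of_not_ge hi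
      have hlt' : (μ:ℝ) / (s0 i : ℝ) * (V i (x i) : ℝ) < (W:ℝ) := by
        exact_mod_cast hlt
      have hfx : (V i (x i) : ℝ) / (s0 i : ℝ) < (W:ℝ) / (μ:ℝ) := by
        rw [div_lt_div_iff₀ (hs0r i) (by linarith : (0:ℝ) < (μ:ℝ))]
        rw [div_mul_eq_mul_div, div_lt_iff₀ (hs0r i)] at hlt'
        nlinarith
      have h1 := hpert i
      have h2 := abs_le.mp h1
      have hfy : ((V i (y i) / s0 i : ℝ≥0) : ℝ) ≤ (W:ℝ)/(μ:ℝ) + ε := by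
        rw [hcoe y i]; linarith [h2.2]
      have key : V i (y i) / s0 i ≤ V istar (y istar) / s0 istar := by
        rw [← NNReal.coe_le_coe]
        have : (W:ℝ)/(μ:ℝ) + ε ≤ (W:ℝ) - 2*ε := by
          simp only [hεdef]; linarith
        linarith [hstar_y]
      exact key.trans (le_ciSup hbddsub ⟨istar, histar_mem⟩)
  · exact ciSup_le fun i => le_ciSup hbddy i.1
end
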